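/- For every positive integer n, every permutation π ∈ S_n has a weak-twin of size at least n/4 − 1; in particular F^weak(n) ≥ n/4 − O(1). -/
import Mathlib


/-- `I, J` form a weak twin of the permutation `π`: they are disjoint, of the same size,
and the sign sequences of `π` restricted to `I` and to `J` coincide. -/
def IsWeakTwin {n : ℕ} (π : Equiv.Perm (Fin n)) (I J : Finset (Fin n)) : Prop :=
  Disjoint I J ∧ I.card = J.card ∧
    ∀ (t : ℕ) (hI : t + 1 < I.card) (hJ : t + 1 < J.card),
      (π (I.orderEmbOfFin rfl ⟨t, Nat.lt_of_succ_lt hI⟩) < π (I.orderEmbOfFin rfl ⟨t + 1, hI⟩) ↔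
       π (J.orderEmbOfFin rfl ⟨t, Nat.lt_of_succ_lt hJ⟩) < π (J.orderEmbOfFin rfl ⟨t + 1, hJ⟩))

/-- `f^weak(π)`: the maximum size of a weak twin of `π`. -/
noncomputable def maxWeakTwinSize {n : ℕ} (π : Equiv.Perm (Fin n)) : ℕ :=
  sSup {ℓ : ℕ | ∃ I J : Finset (Fin n), IsWeakTwin π I J ∧ I.card = ℓ}

/-- `F^weak(n)`: the minimum of `f^weak(π)` over all `π ∈ S_n`. -/
noncomputable def Fweak (n : ℕ) : ℕ :=
  sInf {m : ℕ | ∃ π : Equiv.Perm (Fin n), maxWeakTwinSize π = m}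

/- ### Auxiliary development -/

/-- Non-nested (as value intervals) pairs, on ℕ. -/
def WTnn (u v p q : ℕ) : Prop := ¬(u < p ∧ q < v) ∧ ¬(p < u ∧ v < q)

lemma wt_step (p q r s w x y z : ℕ) (h1 : p < q) (h2 : q ≤ r) (h3 : r < s)
    (h4 : w < x) (h5 : x < y) (h6 : y < z) :
    ((WTnn w x p q ∨ WTnn w x r s) ∧ (WTnn x y p q ∨ WTnn x y r s)) ∨
    ((WTnn w x p q ∨ WTnn w x r s) ∧ (WTnn y z p q ∨ WTnn y z r s)) ∨
    ((WTnn x y p q ∨ WTnn x y r s) ∧ (WTnn y z p q ∨ WTnn y z r s)) := by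
  unfold WTnn; omega

lemma wt_ori (u v p q : ℕ) (huv : u < v) (hpq : p < q) (h : WTnn u v p q)
    (d1 : u ≠ p) (d2 : u ≠ q) (d3 : v ≠ p) (d4 : v ≠ q) :
    ((p < u ↔ q < v) ∨ (q < u ↔ p < v)) := by
  unfold WTnn at h; omega

/-- A lockstep chain of length `t`: pairs `(f s, g s)` with the `s`-th pair inside the
block of positions `[4s, 4s+4)`, `f s ≠ g s`, and matching consecutive signs. -/
def WTChain {n : ℕ} (π : Equiv.Perm (Fin n)) (t : ℕ) (f g : ℕ → Fin n) : Prop :=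
  (∀ s, s < t → 4*s ≤ (f s).val ∧ (f s).val < 4*s+4 ∧ 4*s ≤ (g s).val ∧ (g s).val < 4*s+4) ∧
  (∀ s, s < t → f s ≠ g s) ∧
  (∀ s, s+1 < t → (π (f s) < π (f (s+1)) ↔ π (g s) < π (g (s+1))))

lemma WTChain.swap {n : ℕ} {π : Equiv.Perm (Fin n)} {t : ℕ} {f g : ℕ → Fin n}
    (h : WTChain π t f g) : WTChain π t g f :=
  ⟨fun s hs => by have := h.1 s hs; tauto,
   fun s hs => (h.2.1 s hs).symm,
   fun s hs => (h.2.2 s hs).symm⟩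

lemma WTChain.extend {n : ℕ} {π : Equiv.Perm (Fin n)} {t : ℕ} {f g : ℕ → Fin n}
    (h : WTChain π t f g) (ht : 1 ≤ t) (a' b' : Fin n)
    (hb : 4*t ≤ a'.val ∧ a'.val < 4*t+4 ∧ 4*t ≤ b'.val ∧ b'.val < 4*t+4)
    (hne : a' ≠ b')
    (hsig : π (f (t-1)) < π a' ↔ π (g (t-1)) < π b') :
    WTChain π (t+1) (fun s => if s < t then f s else a') (fun s => if s < t then g s else b') := by
  refine ⟨fun s hs => ?_, fun s hs => ?_, fun s hs => ?_⟩
  · by_cases hst : s < t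
    · simp only [if_pos hst]; exact h.1 s hst
    · have : s = t := by omega
      subst this; simp only [if_neg hst]; exact hb
  · by_cases hst : s < t
    · simp only [if_pos hst]; exact h.2.1 s hst
    · simp only [if_neg hst]; exact hne
  · by_cases hst : s + 1 < t
    · have hs' : s < t := by omega
      simp only [if_pos hst, if_pos hs']
      exact h.2.2 s hst
    · have h1 : s + 1 = t := by omega
      have hs' : s < t := by omega
      have h2 : s = t - 1 := by omega
      simp only [if_pos hs', if_neg hst]
      rw [h2]; exact hsig

/-- Sorting the four elements of a block by `π`-value. -/
lemma wt_block_sort {n : ℕ} (π : Equiv.Perm (Fin n)) (t : ℕ) (h : 4*t+4 ≤ n) :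
    ∃ w x y z : Fin n,
      (4*t ≤ w.val ∧ w.val < 4*t+4) ∧ (4*t ≤ x.val ∧ x.val < 4*t+4) ∧
      (4*t ≤ y.val ∧ y.val < 4*t+4) ∧ (4*t ≤ z.val ∧ z.val < 4*t+4) ∧
      π w < π x ∧ π x < π y ∧ π y < π z := by
  have e0 : 4*t < n := by omega
  have e1 : 4*t+1 < n := by omega
  have e2 : 4*t+2 < n := by omega
  have e3 : 4*t+3 < n := by omega
  set S : Finset (Fin n) := {⟨4*t, e0⟩, ⟨4*t+1, e1⟩, ⟨4*t+2, e2⟩, ⟨4*t+3, e3⟩} with hS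
  have hmem : ∀ u : Fin n, u ∈ S → 4*t ≤ u.val ∧ u.val < 4*t+4 := by
    intro u hu
    simp only [hS, Finset.mem_insert, Finset.mem_singleton] at hu
    rcases hu with h | h | h | h <;> subst h <;> simp <;> omega
  have hcard : S.card = 4 := by
    simp only [hS]
    rw [Finset.card_insert_of_notMem, Finset.card_insert_of_notMem,
        Finset.card_insert_of_notMem, Finset.card_singleton] <;>
      simp [Fin.ext_iff] <;> omega
  have hVcard : (S.image π).card = 4 := by
    rw [Finset.card_image_of_injective _ π.injective, hcard]
  set e := (S.image π).orderEmbOfFin hVcard with he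
  have hmemV : ∀ i : Fin 4, e i ∈ S.image π := fun i =>
    Finset.orderEmbOfFin_mem _ hVcard i
  have hpre : ∀ i : Fin 4, ∃ u : Fin n, u ∈ S ∧ π u = e i := by
    intro i
    obtain ⟨u, hu, hπu⟩ := Finset.mem_image.mp (hmemV i)
    exact ⟨u, hu, hπu⟩
  obtain ⟨w, hw, hπw⟩ := hpre 0
  obtain ⟨x, hx, hπx⟩ := hpre 1
  obtain ⟨y, hy, hπy⟩ := hpre 2
  obtain ⟨z, hz, hπz⟩ := hpre 3
  have hmono := (S.image π).orderEmbOfFin hVcard |>.strictMono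
  refine ⟨w, x, y, z, hmem w hw, hmem x hx, hmem y hy, hmem z hz, ?_, ?_, ?_⟩
  · rw [hπw, hπx]; exact hmono (by decide : (0 : Fin 4) < 1)
  · rw [hπx, hπy]; exact hmono (by decide : (1 : Fin 4) < 2)
  · rw [hπy, hπz]; exact hmono (by decide : (2 : Fin 4) < 3)

/-- Extend one of the two chains of the invariant by a non-nested pair. -/
lemma wt_extend_pair {n : ℕ} {π : Equiv.Perm (Fin n)} {t : ℕ} (ht : 1 ≤ t)
    {a b c d : Fin n} {f₁ g₁ f₂ g₂ : ℕ → Fin n}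
    (hab : π a < π b) (hcd : π c < π d)
    (haB : a.val < 4*t) (hbB : b.val < 4*t) (hcB : c.val < 4*t) (hdB : d.val < 4*t)
    (hc1 : WTChain π t f₁ g₁) (hf1 : f₁ (t-1) = a) (hg1 : g₁ (t-1) = b)
    (hc2 : WTChain π t f₂ g₂) (hf2 : f₂ (t-1) = c) (hg2 : g₂ (t-1) = d)
    (a' b' : Fin n) (ha'B : 4*t ≤ a'.val ∧ a'.val < 4*t+4)
    (hb'B : 4*t ≤ b'.val ∧ b'.val < 4*t+4)
    (ha'b' : π a' < π b')
    (hNN : WTnn (π a').val (π b').val (π a).val (π b).val ∨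
           WTnn (π a').val (π b').val (π c).val (π d).val) :
    ∃ f g : ℕ → Fin n, WTChain π (t+1) f g ∧ f t = a' ∧ g t = b' := by
  have hne : a' ≠ b' := fun h => absurd (h ▸ ha'b') (lt_irrefl _)
  have neval : ∀ u v : Fin n, u.val ≥ 4*t → v.val < 4*t → (π u).val ≠ (π v).val := by
    intro u v hu hv hval
    have : π u = π v := Fin.val_injective hval
    have : u = v := π.injective this
    omega
  have key : ∀ (p q : Fin n) (fp gp : ℕ → Fin n), π p < π q →
      p.val < 4*t → q.val < 4*t →
      WTChain π t fp gp → fp (t-1) = p → gp (t-1) = q →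
      WTnn (π a').val (π b').val (π p).val (π q).val →
      ∃ f g : ℕ → Fin n, WTChain π (t+1) f g ∧ f t = a' ∧ g t = b' := by
    intro p q fp gp hpq hpB hqB hch hfp hgp hnn
    have hlt1 : (π a').val < (π b').val := ha'b'
    have hlt2 : (π p).val < (π q).val := hpq
    have hor := wt_ori (π a').val (π b').val (π p).val (π q).val hlt1 hlt2 hnn
      (neval a' p ha'B.1 hpB) (neval a' q ha'B.1 hqB)
      (neval b' p hb'B.1 hpB) (neval b' q hb'B.1 hqB)
    rcases hor with hor | hor
    · refine ⟨_, _, hch.extend ht a' b' ⟨ha'B.1, ha'B.2, hb'B.1, hb'B.2⟩ hne ?_,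
        by simp, by simp⟩
      rw [hfp, hgp]
      exact hor
    · refine ⟨_, _, (hch.swap).extend ht a' b' ⟨ha'B.1, ha'B.2, hb'B.1, hb'B.2⟩ hne ?_,
        by simp, by simp⟩
      rw [hgp, hfp]
      exact hor
  rcases hNN with h | h
  · exact key a b f₁ g₁ hab haB hbB hc1 hf1 hg1 h
  · exact key c d f₂ g₂ hcd hcB hdB hc2 hf2 hg2 h

lemma wt_inv {n : ℕ} (π : Equiv.Perm (Fin n)) :
    ∀ t : ℕ, 1 ≤ t → 4*t ≤ n →
    ∃ (a b c d : Fin n) (f₁ g₁ f₂ g₂ : ℕ → Fin n),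
      a.val < 4*t ∧ b.val < 4*t ∧ c.val < 4*t ∧ d.val < 4*t ∧
      π a < π b ∧ π b ≤ π c ∧ π c < π d ∧
      WTChain π t f₁ g₁ ∧ f₁ (t-1) = a ∧ g₁ (t-1) = b ∧
      WTChain π t f₂ g₂ ∧ f₂ (t-1) = c ∧ g₂ (t-1) = d := by
  intro t
  induction t with
  | zero => intro h; omega
  | succ t ih =>
    intro _ hn
    by_cases ht : 1 ≤ t
    · -- inductive step
      obtain ⟨a, b, c, d, f₁, g₁, f₂, g₂, haB, hbB, hcB, hdB, hab, hbc, hcd,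
        hc1, hf1, hg1, hc2, hf2, hg2⟩ := ih ht (by omega)
      obtain ⟨w, x, y, z, hwB, hxB, hyB, hzB, hwx, hxy, hyz⟩ :=
        wt_block_sort π t (by omega)
      have hstep := wt_step (π a).val (π b).val (π c).val (π d).val
        (π w).val (π x).val (π y).val (π z).val hab hbc hcd hwx hxy hyz
      have EP := fun (a' b' : Fin n) ha'B hb'B ha'b' hNN =>
        wt_extend_pair ht hab hcd haB hbB hcB hdB hc1 hf1 hg1 hc2 hf2 hg2
          a' b' ha'B hb'B ha'b' hNN
      rcases hstep with ⟨h1, h2⟩ | ⟨h1, h2⟩ | ⟨h1, h2⟩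
      · obtain ⟨fA, gA, chA, hfA, hgA⟩ := EP w x hwB hxB hwx h1
        obtain ⟨fB, gB, chB, hfB, hgB⟩ := EP x y hxB hyB hxy h2
        exact ⟨w, x, x, y, fA, gA, fB, gB, by omega, by omega, by omega, by omega,
          hwx, le_refl _, hxy, chA, by simpa using hfA, by simpa using hgA,
          chB, by simpa using hfB, by simpa using hgB⟩
      · obtain ⟨fA, gA, chA, hfA, hgA⟩ := EP w x hwB hxB hwx h1
        obtain ⟨fB, gB, chB, hfB, hgB⟩ := EP y z hyB hzB hyz h2
        exact ⟨w, x, y, z, fA, gA, fB, gB, by omega, by omega, by omega, by omega,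
          hwx, le_of_lt hxy, hyz, chA, by simpa using hfA, by simpa using hgA,
          chB, by simpa using hfB, by simpa using hgB⟩
      · obtain ⟨fA, gA, chA, hfA, hgA⟩ := EP x y hxB hyB hxy h1
        obtain ⟨fB, gB, chB, hfB, hgB⟩ := EP y z hyB hzB hyz h2
        exact ⟨x, y, y, z, fA, gA, fB, gB, by omega, by omega, by omega, by omega,
          hxy, le_refl _, hyz, chA, by simpa using hfA, by simpa using hgA,
          chB, by simpa using hfB, by simpa using hgB⟩
    · -- base case t = 0, proving for t+1 = 1
      have ht0 : t = 0 := by omega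
      subst ht0
      obtain ⟨w, x, y, z, hwB, hxB, hyB, hzB, hwx, hxy, hyz⟩ :=
        wt_block_sort π 0 (by omega)
      have hwne : w ≠ x := fun h => absurd (h ▸ hwx) (lt_irrefl _)
      have hyne : y ≠ z := fun h => absurd (h ▸ hyz) (lt_irrefl _)
      refine ⟨w, x, y, z, (fun _ => w), (fun _ => x), (fun _ => y), (fun _ => z),
        by omega, by omega, by omega, by omega, hwx, le_of_lt hxy, hyz,
        ⟨?_, fun s hs => hwne, fun s hs => by omega⟩, rfl, rfl,
        ⟨?_, fun s hs => hyne, fun s hs => by omega⟩, rfl, rfl⟩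
      · intro s hs
        have h0 : s = 0 := by omega
        subst h0
        show 4*0 ≤ w.val ∧ w.val < 4*0+4 ∧ 4*0 ≤ x.val ∧ x.val < 4*0+4
        omega
      · intro s hs
        have h0 : s = 0 := by omega
        subst h0
        show 4*0 ≤ y.val ∧ y.val < 4*0+4 ∧ 4*0 ≤ z.val ∧ z.val < 4*0+4
        omega

lemma wt_twin_of_chain {n k : ℕ} (π : Equiv.Perm (Fin n)) (f g : ℕ → Fin n)
    (h : WTChain π k f g) :
    ∃ I J : Finset (Fin n), IsWeakTwin π I J ∧ I.card = k := by
  classical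
  set F : Fin k → Fin n := fun s => f s.val with hF
  set G : Fin k → Fin n := fun s => g s.val with hG
  have hFb : ∀ s : Fin k, 4*s.val ≤ (F s).val ∧ (F s).val < 4*s.val+4 :=
    fun s => ⟨(h.1 s.val s.isLt).1, (h.1 s.val s.isLt).2.1⟩
  have hGb : ∀ s : Fin k, 4*s.val ≤ (G s).val ∧ (G s).val < 4*s.val+4 :=
    fun s => ⟨(h.1 s.val s.isLt).2.2.1, (h.1 s.val s.isLt).2.2.2⟩
  have hFm : StrictMono F := by
    intro s s' hss
    have h1 := hFb s; have h2 := hFb s'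
    have h3 : s.val < s'.val := hss
    show (F s).val < (F s').val
    omega
  have hGm : StrictMono G := by
    intro s s' hss
    have h1 := hGb s; have h2 := hGb s'
    have h3 : s.val < s'.val := hss
    show (G s).val < (G s').val
    omega
  set I := Finset.image F Finset.univ with hI
  set J := Finset.image G Finset.univ with hJ
  have hIcard : I.card = k := by
    rw [hI, Finset.card_image_of_injective _ hFm.injective, Finset.card_univ,
      Fintype.card_fin]
  have hJcard : J.card = k := by
    rw [hJ, Finset.card_image_of_injective _ hGm.injective, Finset.card_univ,
      Fintype.card_fin]
  have hdisj : Disjoint I J := by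
    rw [Finset.disjoint_left]
    intro u huI huJ
    obtain ⟨s, -, hs⟩ := Finset.mem_image.mp huI
    obtain ⟨s', -, hs'⟩ := Finset.mem_image.mp huJ
    have hv : F s = G s' := by rw [hs, hs']
    by_cases hss : s.val = s'.val
    · have : s = s' := Fin.ext hss
      subst this
      exact h.2.1 s.val s.isLt hv
    · have h1 := hFb s; have h2 := hGb s'
      have : (F s).val = (G s').val := by rw [hv]
      omega
  have hembI : ∀ x : Fin I.card, I.orderEmbOfFin rfl x = F (Fin.cast hIcard x) := by
    intro x
    have := Finset.orderEmbOfFin_unique (f := fun x : Fin I.card => F (Fin.cast hIcard x))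
      (rfl : I.card = I.card)
      (fun x => Finset.mem_image_of_mem F (Finset.mem_univ _))
      (fun u v huv => hFm (show (u : ℕ) < v from huv))
    exact (congrFun this x).symm
  have hembJ : ∀ x : Fin J.card, J.orderEmbOfFin rfl x = G (Fin.cast hJcard x) := by
    intro x
    have := Finset.orderEmbOfFin_unique (f := fun x : Fin J.card => G (Fin.cast hJcard x))
      (rfl : J.card = J.card)
      (fun x => Finset.mem_image_of_mem G (Finset.mem_univ _))
      (fun u v huv => hGm (show (u : ℕ) < v from huv))
    exact (congrFun this x).symm
  refine ⟨I, J, ⟨hdisj, by rw [hIcard, hJcard], ?_⟩, hIcard⟩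
  intro t hIt hJt
  have hk : t + 1 < k := by rw [← hIcard]; exact hIt
  rw [hembI, hembI, hembJ, hembJ]
  exact h.2.2 t hk

lemma wt_main {n : ℕ} (π : Equiv.Perm (Fin n)) :
    ∃ I J : Finset (Fin n), IsWeakTwin π I J ∧ I.card = n / 4 := by
  by_cases hk : n / 4 = 0
  · refine ⟨∅, ∅, ⟨Finset.disjoint_empty_left _, rfl, fun t hI hJ => ?_⟩, by simp [hk]⟩
    simp at hI
  · have hk1 : 1 ≤ n / 4 := by omega
    have hkn : 4 * (n / 4) ≤ n := by omega
    obtain ⟨a, b, c, d, f₁, g₁, f₂, g₂, _, _, _, _, _, _, _, hc1, -, -, -, -, -⟩ :=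
      wt_inv π (n/4) hk1 hkn
    exact wt_twin_of_chain π f₁ g₁ hc1


/-- Every permutation `π ∈ S_n` has a weak twin of size at least `n/4 − 1`;
in particular `F^weak(n) ≥ n/4 − O(1)`. -/
theorem weakTwin_lower_bound_quarter (n : ℕ) (hn : 1 ≤ n) :
    (∀ π : Equiv.Perm (Fin n),
      ∃ I J : Finset (Fin n), IsWeakTwin π I J ∧ (n : ℝ) / 4 - 1 ≤ (I.card : ℝ)) ∧
    (n : ℝ) / 4 - 1 ≤ (Fweak n : ℝ) := by
  have hbound : (n : ℝ) / 4 - 1 ≤ ((n / 4 : ℕ) : ℝ) := by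
    have h4 : n < 4 * (n / 4) + 4 := by omega
    have h4' : (n : ℝ) < 4 * ((n / 4 : ℕ) : ℝ) + 4 := by exact_mod_cast h4
    linarith
  constructor
  · intro π
    obtain ⟨I, J, hT, hcard⟩ := wt_main π
    exact ⟨I, J, hT, by rw [hcard]; exact hbound⟩
  · have hne : {m : ℕ | ∃ π : Equiv.Perm (Fin n), maxWeakTwinSize π = m}.Nonempty :=
      ⟨maxWeakTwinSize 1, 1, rfl⟩
    obtain ⟨π₀, hπ₀⟩ := Nat.sInf_mem hne
    obtain ⟨I, J, hT, hcard⟩ := wt_main π₀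
    have hle : I.card ≤ maxWeakTwinSize π₀ := by
      apply le_csSup
      · refine ⟨n, fun ℓ hℓ => ?_⟩
        obtain ⟨I', J', -, hc⟩ := hℓ
        rw [← hc]
        exact le_trans (Finset.card_le_univ I') (by simp)
      · exact ⟨I, J, hT, rfl⟩
    have : ((n / 4 : ℕ) : ℝ) ≤ ((Fweak n : ℕ) : ℝ) := by
      have : n / 4 ≤ Fweak n := by
        rw [show Fweak n = maxWeakTwinSize π₀ from hπ₀.symm]
        rw [← hcard]; exact hle
      exact_mod_cast this
    linarith
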